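/- arXiv:1806.10742 — 2 statements merged into one kernel-verified Lean document; each statement's English description precedes it below -/
import Mathlib

section
/- Let k be a field of characteristic zero, K a finitely generated field extension of k, and K(x,y) a rational function field in two variables over K. Write K = k(r₁,…,r_m) and let B = k[x, y, r₁x, r₁y, …, r_m x, r_m y] ⊆ K[x,y]. Then B is an affine k-domain with Frac(B) = K(x,y), B ∩ K = k, and the Makar-Limanov invariant of B equals k. -/
def IsLND {B : Type*} [CommRing B] (D : B → B) : Prop :=
  (∀ a b : B, D (a + b) = D a + D b) ∧
  (∀ a b : B, D (a * b) = a * D b + D a * b) ∧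
  (∀ x : B, ∃ n : ℕ, D^[n] x = 0)

/-!
Every generator of `B` has zero constant term, so the constant term of every element of `B` lies
in `k`; this gives `B ∩ K = k`. The fraction field of `B` contains `x`, `y` and `rᵢ = (rᵢx)/x`,
hence `k(r₁, …, r_m) = K`, hence all of `K(x,y)`.

The locally nilpotent derivations `y ∂/∂x` and `x ∂/∂y` of `K[x,y]` map the generators of `B`
into `B`, so they restrict to `B`; an element killed by both is a constant polynomial
(characteristic zero), hence lies in `k`. Conversely a locally nilpotent derivation `D` of a domain
of characteristic zero kills units: if `uv = 1` and `p`, `q` are the largest exponents with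
`Dᵖu ≠ 0`, `D^q v ≠ 0`, the Leibniz rule gives `D^(p+q) (uv) = C(p+q, p) Dᵖu D^q v ≠ 0`, which
forces `p + q = 0`.
-/

open Finset

theorem Function.exists_iterate_ne_zero_and_iterate_succ_eq_zero {M : Type*} [Zero M]
    (f : M → M) {a : M} (ha : a ≠ 0) (hf : ∃ n, f^[n] a = 0) :
    ∃ p, f^[p] a ≠ 0 ∧ f^[p + 1] a = 0 := by
  obtain ⟨n, hn⟩ := hf
  induction n with
  | zero => exact absurd hn ha
  | succ n ih =>
    by_cases h : f^[n] a = 0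
    exacts [ih h, ⟨n, h, hn⟩]

namespace Derivation

variable {R A : Type*} [CommSemiring R] [CommSemiring A] [Algebra R A] (D : Derivation R A A)

theorem iterate_map_mul (n : ℕ) (a b : A) :
    D^[n] (a * b) = ∑ ij ∈ antidiagonal n, n.choose ij.1 • (D^[ij.1] a * D^[ij.2] b) := by
  induction n with
  | zero => simp
  | succ n ih =>
    rw [Finset.sum_antidiagonal_choose_succ_nsmul (M := A) (fun i j => D^[i] a * D^[j] b) n]
    simp only [Function.iterate_succ_apply', ih, map_sum, map_nsmul, leibniz, smul_eq_mul,
      smul_add, sum_add_distrib]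
    refine congrArg _ (sum_congr rfl fun ij hij => ?_)
    rw [Nat.choose_symm_of_eq_add (HasAntidiagonal.mem_antidiagonal.1 hij).symm, mul_comm]

theorem iterate_map_eq_zero_of_le {n N : ℕ} {a : A} (ha : D^[n] a = 0) (hnN : n ≤ N) :
    D^[N] a = 0 := by
  rw [← Nat.sub_add_cancel hnN, Function.iterate_add_apply, ha, iterate_map_zero]

theorem iterate_map_mul_eq_zero {n m : ℕ} {a b : A} (ha : D^[n] a = 0) (hb : D^[m] b = 0) :
    D^[n + m] (a * b) = 0 := by
  rw [iterate_map_mul]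
  refine sum_eq_zero fun ij hij => ?_
  rw [HasAntidiagonal.mem_antidiagonal] at hij
  rcases le_or_gt n ij.1 with hi | hi
  · rw [D.iterate_map_eq_zero_of_le ha hi, zero_mul, smul_zero]
  · rw [D.iterate_map_eq_zero_of_le hb (by omega), mul_zero, smul_zero]

def locallyNilpotentSubalgebra : Subalgebra R A where
  carrier := {a | ∃ n, D^[n] a = 0}
  mul_mem' := fun ⟨n, ha⟩ ⟨m, hb⟩ => ⟨n + m, D.iterate_map_mul_eq_zero ha hb⟩
  add_mem' := fun {a b} ⟨n, ha⟩ ⟨m, hb⟩ => ⟨max n m, by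
    rw [iterate_map_add, D.iterate_map_eq_zero_of_le ha (le_max_left n m),
      D.iterate_map_eq_zero_of_le hb (le_max_right n m), add_zero]⟩
  algebraMap_mem' r := ⟨1, D.map_algebraMap r⟩

theorem iterate_map_mul_of_iterate_succ_eq_zero {n m : ℕ} {a b : A} (ha : D^[n + 1] a = 0)
    (hb : D^[m + 1] b = 0) :
    D^[n + m] (a * b) = (n + m).choose n • (D^[n] a * D^[m] b) := by
  rw [iterate_map_mul]
  refine sum_eq_single_of_mem (n, m) (HasAntidiagonal.mem_antidiagonal.2 rfl)
    fun ij hij hne => ?_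
  rw [HasAntidiagonal.mem_antidiagonal] at hij
  rcases lt_or_ge n ij.1 with hi | hi
  · rw [D.iterate_map_eq_zero_of_le ha hi, zero_mul, smul_zero]
  · have hj : m < ij.2 := by
      by_contra! hj
      exact hne (Prod.ext (by omega) (by omega))
    rw [D.iterate_map_eq_zero_of_le hb hj, mul_zero, smul_zero]

theorem map_eq_zero_of_map_mul_eq_zero [IsDomain A] [CharZero A] {a b : A} (ha : a ≠ 0)
    (hb : b ≠ 0) (hna : ∃ n, D^[n] a = 0) (hnb : ∃ n, D^[n] b = 0) (hab : D (a * b) = 0) :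
    D a = 0 := by
  obtain ⟨p, hp, hp1⟩ := Function.exists_iterate_ne_zero_and_iterate_succ_eq_zero D ha hna
  obtain ⟨q, hq, hq1⟩ := Function.exists_iterate_ne_zero_and_iterate_succ_eq_zero D hb hnb
  rcases p with _ | p
  · exact hp1
  · have htop := D.iterate_map_mul_of_iterate_succ_eq_zero hp1 hq1
    rw [add_right_comm, Function.iterate_succ_apply, hab, iterate_map_zero, nsmul_eq_mul] at htop
    exact absurd htop.symm <|
      mul_ne_zero (Nat.cast_ne_zero.2 (Nat.choose_pos (by omega)).ne') (mul_ne_zero hp hq)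

theorem map_eq_zero_of_isUnit [IsDomain A] [CharZero A] (hD : ∀ a, ∃ n, D^[n] a = 0) {u : A}
    (hu : IsUnit u) : D u = 0 := by
  obtain ⟨v, hv⟩ := hu.exists_right_inv
  exact D.map_eq_zero_of_map_mul_eq_zero (left_ne_zero_of_mul_eq_one hv)
    (right_ne_zero_of_mul_eq_one hv) (hD u) (hD v) (by rw [hv, map_one_eq_zero])

theorem iterate_smul_apply {c : A} (hc : D c = 0) (n : ℕ) (a : A) :
    (c • D)^[n] a = c ^ n * D^[n] a := by
  induction n with
  | zero => simp
  | succ n ih =>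
    rw [Function.iterate_succ_apply', ih, smul_apply, leibniz, leibniz_pow, hc,
      Function.iterate_succ_apply']
    simp only [smul_eq_mul, mul_zero, smul_zero, add_zero]
    ring

theorem map_mem_adjoin {s : Set A} (hs : ∀ x ∈ s, D x ∈ Algebra.adjoin R s) {a : A}
    (ha : a ∈ Algebra.adjoin R s) : D a ∈ Algebra.adjoin R s := by
  induction ha using Algebra.adjoin_induction with
  | mem x hx => exact hs x hx
  | algebraMap r => rw [map_algebraMap]; exact zero_mem _
  | add x y _ _ hx hy => rw [map_add]; exact add_mem hx hy
  | mul x y hx' hy' hx hy =>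
    rw [leibniz, smul_eq_mul, smul_eq_mul]
    exact add_mem (mul_mem hx' hy) (mul_mem hy' hx)

def restrict {B : Subalgebra R A} (hB : ∀ a ∈ B, D a ∈ B) : B → B :=
  fun b => ⟨D b, hB b b.2⟩

end Derivation

theorem Derivation.isLND_restrict {R A : Type*} [CommRing R] [CommRing A] [Algebra R A]
    (D : Derivation R A A) {B : Subalgebra R A} (hB : ∀ a ∈ B, D a ∈ B)
    (hD : ∀ a, ∃ n, D^[n] a = 0) : IsLND (D.restrict hB) := by
  have hval : Function.Semiconj Subtype.val (D.restrict hB) D := fun _ => rfl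
  refine ⟨fun a b => Subtype.ext (map_add D (a : A) b), fun a b => Subtype.ext ?_,
    fun b => ?_⟩
  · simp only [restrict, leibniz, smul_eq_mul, Subalgebra.coe_add, Subalgebra.coe_mul,
      mul_comm _ (D _)]
  · obtain ⟨n, hn⟩ := hD b
    exact ⟨n, Subtype.ext ((hval.iterate_right n b).trans hn)⟩

theorem Derivation.map_eq_zero_of_forall_isLND {R A : Type*} [CommRing R] [CommRing A]
    [Algebra R A] (D : Derivation R A A) {B : Subalgebra R A} (hB : ∀ a ∈ B, D a ∈ B)
    (hD : ∀ a, ∃ n, D^[n] a = 0) {b : B} (hb : ∀ D : B → B, IsLND D → D b = 0) : D b = 0 :=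
  congrArg Subtype.val (hb _ (D.isLND_restrict hB hD))

namespace IsLND

variable {B : Type*} [CommRing B] {D : B → B}

def toDerivation (h : IsLND D) : Derivation ℤ B B :=
  Derivation.mk' (AddMonoidHom.mk' D h.1).toIntLinearMap fun a b => by
    simp [h.2.1 a b, mul_comm]

theorem map_algebraMap_eq_zero {k : Type*} [Field k] [CharZero k] [Algebra k B] [IsDomain B]
    (h : IsLND D) (d : k) : D (algebraMap k B d) = 0 := by
  -- `D` need not be `k`-linear: nonzero scalars are handled as units.
  have := charZero_of_injective_algebraMap (algebraMap k B).injective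
  rcases eq_or_ne d 0 with rfl | hd
  · rw [map_zero]; exact h.toDerivation.map_zero
  · exact h.toDerivation.map_eq_zero_of_isUnit h.2.2 (hd.isUnit.map _)

end IsLND

namespace MvPolynomial

variable {σ R : Type*} [CommSemiring R]

theorem locallyNilpotentSubalgebra_pderiv (i : σ) :
    (pderiv (R := R) (σ := σ) i).locallyNilpotentSubalgebra = ⊤ := by
  rw [eq_top_iff, ← adjoin_range_X, Algebra.adjoin_le_iff]
  rintro _ ⟨j, rfl⟩
  refine ⟨2, ?_⟩
  rcases eq_or_ne j i with rfl | hji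
  · simp [pderiv_X_self]
  · simp [pderiv_X_of_ne hji]

theorem exists_iterate_smul_pderiv_eq_zero {i j : σ} (hji : j ≠ i) (p : MvPolynomial σ R) :
    ∃ n, ((X j : MvPolynomial σ R) • pderiv (R := R) i)^[n] p = 0 := by
  obtain ⟨n, hn⟩ : p ∈ (pderiv i).locallyNilpotentSubalgebra := by
    rw [locallyNilpotentSubalgebra_pderiv]; trivial
  exact ⟨n, by rw [Derivation.iterate_smul_apply _ (pderiv_X_of_ne hji), hn, mul_zero]⟩

theorem smul_pderiv_C_mul_X (c : R) (i j l : σ) :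
    ((X j : MvPolynomial σ R) • pderiv i) (C c * X l) = 0 ∨
      ((X j : MvPolynomial σ R) • pderiv i) (C c * X l) = C c * X j := by
  classical
  rw [Derivation.smul_apply, smul_eq_mul, pderiv_C_mul, pderiv_X, Pi.single_apply]
  split_ifs
  · exact Or.inr (by rw [mul_one, mul_comm])
  · exact Or.inl (by rw [mul_zero, mul_zero])

theorem eq_C_of_forall_pderiv_eq_zero {R : Type*} [CommRing R] [IsDomain R] [CharZero R]
    {p : MvPolynomial σ R} (hp : ∀ i, pderiv i p = 0) : p = C (constantCoeff p) := by
  classical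
  ext n
  rw [coeff_C]
  split_ifs with hn
  · rw [← hn, ← constantCoeff_eq]
  obtain ⟨i, hi⟩ : ∃ i, n i ≠ 0 := by
    by_contra! h
    exact hn (Finsupp.ext h).symm
  have hsplit : n - Finsupp.single i 1 + Finsupp.single i 1 = n :=
    tsub_add_cancel_of_le (Finsupp.single_le_iff.2 (Nat.one_le_iff_ne_zero.2 hi))
  have := coeff_pderiv (i := i) p (n - Finsupp.single i 1)
  rw [hp i, coeff_zero, hsplit] at this
  exact (mul_eq_zero.1 this.symm).resolve_right (Nat.cast_add_one_ne_zero _)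

theorem constantCoeff_mem_range_of_mem_adjoin {k K : Type*} [CommSemiring k] [CommSemiring K]
    [Algebra k K] {s : Set (MvPolynomial σ K)} (hs : ∀ x ∈ s, constantCoeff x = 0)
    {p : MvPolynomial σ K} (hp : p ∈ Algebra.adjoin k s) :
    constantCoeff p ∈ Set.range (algebraMap k K) := by
  have hbot : (Algebra.adjoin k s).map ((aeval (0 : σ → K)).restrictScalars k) ≤ ⊥ := by
    rw [AlgHom.map_adjoin, Algebra.adjoin_le_iff]
    rintro _ ⟨x, hx, rfl⟩
    exact Algebra.mem_bot.2 ⟨0, by simp [hs x hx]⟩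
  simpa using Algebra.mem_bot.1 (hbot ⟨p, hp, rfl⟩)

end MvPolynomial

theorem Subring.exists_mul_eq_of_mem_closure_image {A L : Type*} [CommRing A] [Field L]
    {ι : A →+* L} (hι : Function.Injective ι) (B : Subring A) {q : L}
    (hq : q ∈ Subfield.closure (ι '' B)) :
    ∃ a b : A, a ∈ B ∧ b ∈ B ∧ b ≠ 0 ∧ q * ι b = ι a := by
  rw [Subfield.mem_closure_iff, ← B.coe_map, Subring.closure_eq] at hq
  obtain ⟨_, ⟨a, ha, rfl⟩, _, ⟨b, hb, rfl⟩, rfl⟩ := hq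
  rcases eq_or_ne b 0 with rfl | hb0
  · have := ι.domain_nontrivial
    exact ⟨0, 1, B.zero_mem, B.one_mem, one_ne_zero, by simp⟩
  · exact ⟨a, b, ha, hb, hb0, div_mul_cancel₀ _ ((map_ne_zero_iff ι hι).2 hb0)⟩

theorem IntermediateField.subfield_eq_top_of_adjoin_eq_top {k K : Type*} [Field k] [Field K]
    [Algebra k K] {s : Set K} (hs : adjoin k s = ⊤) {F : Subfield K}
    (hk : Set.range (algebraMap k K) ⊆ F) (hsF : s ⊆ F) : F = ⊤ := by
  have hcl := congrArg toSubfield hs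
  rw [adjoin_toSubfield, top_toSubfield] at hcl
  rw [eq_top_iff, ← hcl, Subfield.closure_le]
  exact Set.union_subset hk hsF

namespace MvPolynomial

variable {σ K L : Type*} [Field K] [Field L] [Algebra (MvPolynomial σ K) L]
  [IsFractionRing (MvPolynomial σ K) L]

theorem subfield_eq_top_of_forall_mem {F : Subfield L}
    (hC : ∀ c, algebraMap (MvPolynomial σ K) L (C c) ∈ F)
    (hX : ∀ j, algebraMap (MvPolynomial σ K) L (X j) ∈ F) : F = ⊤ := by
  have hpoly : ∀ p, algebraMap (MvPolynomial σ K) L p ∈ F := by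
    intro p
    induction p using MvPolynomial.induction_on with
    | C c => exact hC c
    | add p q hp hq => rw [map_add]; exact F.add_mem hp hq
    | mul_X p j hp => rw [map_mul]; exact F.mul_mem hp (hX j)
  refine eq_top_iff.2 fun q _ => ?_
  obtain ⟨a, b, -, rfl⟩ := IsFractionRing.div_surjective (A := MvPolynomial σ K) q
  exact F.div_mem (hpoly a) (hpoly b)

theorem closure_image_subalgebra_eq_top {k : Type*} [Field k] [Algebra k K] {s : Set K}
    (hs : IntermediateField.adjoin k s = ⊤) (B : Subalgebra k (MvPolynomial σ K))
    (hX : ∀ j, X j ∈ B) (j₀ : σ) (hsX : ∀ c ∈ s, C c * X j₀ ∈ B) :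
    Subfield.closure (algebraMap (MvPolynomial σ K) L '' B) = ⊤ := by
  set ι := algebraMap (MvPolynomial σ K) L
  set F := Subfield.closure (ι '' B)
  have hBF : ∀ p ∈ B, ι p ∈ F := fun p hp => Subfield.subset_closure ⟨p, hp, rfl⟩
  have hK : F.comap (ι.comp C) = ⊤ := by
    refine IntermediateField.subfield_eq_top_of_adjoin_eq_top hs ?_ fun c hc => ?_
    · rintro _ ⟨d, rfl⟩
      have hd : C (algebraMap k K d) = algebraMap k (MvPolynomial σ K) d := by
        rw [IsScalarTower.algebraMap_apply k K (MvPolynomial σ K), algebraMap_eq]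
      show ι (C _) ∈ F
      rw [hd]
      exact hBF _ (B.algebraMap_mem d)
    · have hXne : ι (X j₀) ≠ 0 :=
        (map_ne_zero_iff ι (IsFractionRing.injective _ L)).2 (X_ne_zero j₀)
      have := F.div_mem (hBF _ (hsX c hc)) (hBF _ (hX j₀))
      rwa [map_mul, mul_div_cancel_right₀ _ hXne] at this
  refine subfield_eq_top_of_forall_mem (fun c => ?_) (fun j => hBF _ (hX j))
  exact (hK ▸ Subfield.mem_top c : c ∈ F.comap (ι.comp C))

section ScaledVariables

variable {k K : Type*} [Field k] [Field K] [Algebra k K] {m : ℕ} (r : Fin m → K)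

def scaledVariables : Set (MvPolynomial (Fin 2) K) :=
  {X 0, X 1} ∪ ⋃ i : Fin m, {C (r i) * X 0, C (r i) * X 1}

theorem X_mem_adjoin_scaledVariables (j : Fin 2) :
    X j ∈ Algebra.adjoin k (scaledVariables r) :=
  Algebra.subset_adjoin (by fin_cases j <;> simp [scaledVariables])

theorem C_mul_X_mem_adjoin_scaledVariables (i : Fin m) (j : Fin 2) :
    C (r i) * X j ∈ Algebra.adjoin k (scaledVariables r) :=
  Algebra.subset_adjoin (.inr (Set.mem_iUnion.2 ⟨i, by fin_cases j <;> simp⟩))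

theorem constantCoeff_mem_range_of_mem_adjoin_scaledVariables {p : MvPolynomial (Fin 2) K}
    (hp : p ∈ Algebra.adjoin k (scaledVariables r)) :
    constantCoeff p ∈ Set.range (algebraMap k K) := by
  refine constantCoeff_mem_range_of_mem_adjoin ?_ hp
  rintro x ((rfl | rfl) | ⟨_, ⟨i, rfl⟩, (rfl | rfl)⟩) <;> simp

theorem smul_pderiv_mem_adjoin_scaledVariables (i j : Fin 2) {p : MvPolynomial (Fin 2) K}
    (hp : p ∈ Algebra.adjoin k (scaledVariables r)) :
    ((X j : MvPolynomial (Fin 2) K) • pderiv i) p ∈ Algebra.adjoin k (scaledVariables r) := by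
  have hCX (c : K) (l : Fin 2) (hc : C c * X j ∈ Algebra.adjoin k (scaledVariables r)) :
      ((X j : MvPolynomial (Fin 2) K) • pderiv i) (C c * X l) ∈
        Algebra.adjoin k (scaledVariables r) :=
    (smul_pderiv_C_mul_X c i j l).elim (· ▸ zero_mem _) (· ▸ hc)
  have hXj : C 1 * X j ∈ Algebra.adjoin k (scaledVariables r) := by
    simpa using X_mem_adjoin_scaledVariables r j
  refine Derivation.map_mem_adjoin
    (((X j : MvPolynomial (Fin 2) K) • pderiv i).restrictScalars k) ?_ hp
  rintro x ((rfl | rfl) | ⟨_, ⟨t, rfl⟩, (rfl | rfl)⟩)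
  · simpa using hCX 1 0 hXj
  · simpa using hCX 1 1 hXj
  · exact hCX _ _ (C_mul_X_mem_adjoin_scaledVariables r t j)
  · exact hCX _ _ (C_mul_X_mem_adjoin_scaledVariables r t j)

theorem pderiv_eq_zero_of_forall_isLND {i : Fin 2} (j : Fin 2) (hji : j ≠ i)
    {b : Algebra.adjoin k (scaledVariables r)}
    (hb : ∀ D : Algebra.adjoin k (scaledVariables r) → Algebra.adjoin k (scaledVariables r),
      IsLND D → D b = 0) :
    pderiv i (b : MvPolynomial (Fin 2) K) = 0 := by
  have hDb := Derivation.map_eq_zero_of_forall_isLND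
    (((X j : MvPolynomial (Fin 2) K) • pderiv i).restrictScalars k)
    (fun _ => smul_pderiv_mem_adjoin_scaledVariables r i j)
    (exists_iterate_smul_pderiv_eq_zero hji) hb
  exact (mul_eq_zero.1 hDb).resolve_left (X_ne_zero j)

theorem exists_algebraMap_eq_of_forall_isLND [CharZero k]
    {b : Algebra.adjoin k (scaledVariables r)}
    (hb : ∀ D : Algebra.adjoin k (scaledVariables r) → Algebra.adjoin k (scaledVariables r),
      IsLND D → D b = 0) :
    ∃ d : k, algebraMap k _ d = b := by
  have : CharZero K := charZero_of_injective_algebraMap (algebraMap k K).injective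
  have hbC := eq_C_of_forall_pderiv_eq_zero fun i : Fin 2 => by
    fin_cases i
    exacts [pderiv_eq_zero_of_forall_isLND r 1 (by decide) hb,
      pderiv_eq_zero_of_forall_isLND r 0 (by decide) hb]
  obtain ⟨d, hd⟩ := constantCoeff_mem_range_of_mem_adjoin_scaledVariables r b.2
  refine ⟨d, Subtype.ext ?_⟩
  rw [hbC, ← hd, ← algebraMap_eq, ← IsScalarTower.algebraMap_apply]
  rfl

theorem exists_mem_adjoin_scaledVariables_mul_eq
    (hr : IntermediateField.adjoin k (Set.range r) = ⊤)
    (q : FractionRing (MvPolynomial (Fin 2) K)) :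
    ∃ a b : MvPolynomial (Fin 2) K, a ∈ Algebra.adjoin k (scaledVariables r) ∧
      b ∈ Algebra.adjoin k (scaledVariables r) ∧ b ≠ 0 ∧
      q * algebraMap _ (FractionRing (MvPolynomial (Fin 2) K)) b = algebraMap _ _ a := by
  have hclosure := closure_image_subalgebra_eq_top (L := FractionRing (MvPolynomial (Fin 2) K))
    hr _ (X_mem_adjoin_scaledVariables r) 0
    fun _ ⟨i, hi⟩ => hi ▸ C_mul_X_mem_adjoin_scaledVariables r i 0
  exact (Algebra.adjoin k (scaledVariables r)).toSubring.exists_mul_eq_of_mem_closure_image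
    (IsFractionRing.injective _ _) (hclosure ▸ Subfield.mem_top q)

end ScaledVariables

end MvPolynomial

open MvPolynomial in
/-- Let `K = k(r₁,…,r_m)` be a finitely generated field extension of a field `k` of
characteristic zero, and let `B = k[x, y, r₁x, r₁y, …, r_m x, r_m y] ⊆ K[x,y]`.
Then `B` is an affine `k`-domain (finitely generated over `k`), `Frac B = K(x,y)`,
`B ∩ K = k`, and `ML(B) = k`. -/
theorem stmt10 {k K : Type*} [Field k] [Field K] [Algebra k K] [CharZero k]
    {m : ℕ} (r : Fin m → K)
    (hgen : IntermediateField.adjoin k (Set.range r) = ⊤)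
    (B : Subalgebra k (MvPolynomial (Fin 2) K))
    (hB : B = Algebra.adjoin k
      ({X 0, X 1} ∪ ⋃ i : Fin m, {C (r i) * X 0, C (r i) * X 1})) :
    B.FG ∧
    (∀ q : FractionRing (MvPolynomial (Fin 2) K), ∃ a b : MvPolynomial (Fin 2) K,
      a ∈ B ∧ b ∈ B ∧ b ≠ 0 ∧
      q * algebraMap (MvPolynomial (Fin 2) K) (FractionRing (MvPolynomial (Fin 2) K)) b =
        algebraMap (MvPolynomial (Fin 2) K) (FractionRing (MvPolynomial (Fin 2) K)) a) ∧
    (∀ c : K, C c ∈ B → ∃ d : k, algebraMap k K d = c) ∧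
    (∀ b : ↥B, (∀ D : ↥B → ↥B, IsLND D → D b = 0) → ∃ d : k, algebraMap k ↥B d = b) ∧
    (∀ d : k, ∀ D : ↥B → ↥B, IsLND D → D (algebraMap k ↥B d) = 0) := by
  subst hB
  exact ⟨⟨(Set.toFinite _).toFinset, by rw [Set.Finite.coe_toFinset]⟩,
    exists_mem_adjoin_scaledVariables_mul_eq r hgen,
    fun c hc => by simpa using constantCoeff_mem_range_of_mem_adjoin_scaledVariables r hc,
    fun b hb => exists_algebraMap_eq_of_forall_isLND r hb,
    fun d D hD => hD.map_algebraMap_eq_zero d⟩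
end

section
/- Let B be a domain of characteristic zero and Δ a set of locally nilpotent derivations of B. Then B ∩ K_Δ = A_Δ, where A_Δ = ⋂_{D∈Δ} ker D and K_Δ = ⋂_{D∈Δ} Frac(ker D) inside Frac(B). In particular, B ∩ FML(B) = ML(B). -/
namespace Derivation

section

variable {R A M : Type*} [CommSemiring R] [CommSemiring A] [AddCommMonoid M]
  [Algebra R A] [Module A M] [Module R M]

def kerSubalgebra (D : Derivation R A M) : Subalgebra R A where
  carrier := {a | D a = 0}
  mul_mem' {a b} ha hb := by simp_all [leibniz]
  add_mem' {a b} ha hb := by simp_all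
  algebraMap_mem' r := D.map_algebraMap r

theorem mem_kerSubalgebra {D : Derivation R A M} {a : A} : a ∈ D.kerSubalgebra ↔ D a = 0 :=
  Iff.rfl

end

variable {R A : Type*} [CommSemiring R] [CommRing A] [NoZeroDivisors A] [Algebra R A]

theorem mem_kerSubalgebra_of_mul_mem {D : Derivation R A A} {a b : A}
    (hb : b ∈ D.kerSubalgebra) (hb0 : b ≠ 0) (hab : a * b ∈ D.kerSubalgebra) :
    a ∈ D.kerSubalgebra := by
  rw [mem_kerSubalgebra, leibniz, hb, smul_zero, zero_add, smul_eq_mul] at hab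
  exact (mul_eq_zero.mp hab).resolve_left hb0

end Derivation

theorem Subring.mem_of_map_mem_closure {B L : Type*} [CommRing B] [Field L] {f : B →+* L}
    (hf : Function.Injective f) {A : Subring B}
    (hA : ∀ a b : B, b ∈ A → b ≠ 0 → a * b ∈ A → a ∈ A) {x : B}
    (hx : f x ∈ Subfield.closure (f '' A)) : x ∈ A := by
  rw [Subfield.mem_closure_iff, ← A.coe_map, Subring.closure_eq] at hx
  obtain ⟨_, ⟨a, ha, rfl⟩, _, ⟨b, hb, rfl⟩, hxab⟩ := hx
  by_cases hb0 : b = 0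
  · rw [hb0, map_zero, div_zero, ← map_zero f] at hxab
    exact hf hxab ▸ A.zero_mem
  · have hfb : f b ≠ 0 := (map_ne_zero_iff f hf).mpr hb0
    have hxb : x * b = a := hf (by rw [map_mul, ← hxab, div_mul_cancel₀ _ hfb])
    exact hA x b hb hb0 (hxb ▸ ha)

def IsLND.toDerivation_s14 {B : Type*} [CommRing B] {D : B → B} (hD : IsLND D) :
    Derivation ℤ B B :=
  Derivation.mk' (AddMonoidHom.mk' D hD.1).toIntLinearMap fun a b => by
    simp [hD.2.1, mul_comm]

theorem IsLND.algebraMap_mem_closure_iff {B L : Type*} [CommRing B] [IsDomain B]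
    [Field L] [Algebra B L] [IsFractionRing B L] {D : B → B} (hD : IsLND D) (x : B) :
    algebraMap B L x ∈ Subfield.closure ((algebraMap B L) '' {y : B | D y = 0}) ↔ D x = 0 :=
  ⟨fun hx => Subring.mem_of_map_mem_closure (A := hD.toDerivation_s14.kerSubalgebra.toSubring)
      (IsFractionRing.injective B L)
      (fun _ _ => Derivation.mem_kerSubalgebra_of_mul_mem) hx,
    fun hx => Subfield.subset_closure ⟨x, hx, rfl⟩⟩

theorem stmt14_general {B L : Type*} [CommRing B] [IsDomain B]
    [Field L] [Algebra B L] [IsFractionRing B L]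
    (Δ : Set (B → B)) (hΔ : ∀ D ∈ Δ, IsLND D) :
    ∀ x : B,
      algebraMap B L x ∈ ⨅ D ∈ Δ, Subfield.closure ((algebraMap B L) '' {y : B | D y = 0})
      ↔ (∀ D ∈ Δ, D x = 0) := by
  intro x
  simp only [Subfield.mem_iInf]
  exact forall₂_congr fun D hD => (hΔ D hD).algebraMap_mem_closure_iff x

/-- If `B` is a domain of characteristic zero and `Δ` a set of locally nilpotent
derivations of `B`, then `B ∩ K_Δ = A_Δ` inside `L = Frac B`, where
`A_Δ = ⋂_{D ∈ Δ} ker D` and `K_Δ = ⋂_{D ∈ Δ} Frac (ker D)`. -/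
theorem stmt14 {B L : Type*} [CommRing B] [IsDomain B] [CharZero B]
    [Field L] [Algebra B L] [IsFractionRing B L]
    (Δ : Set (B → B)) (hΔ : ∀ D ∈ Δ, IsLND D) :
    ∀ x : B,
      algebraMap B L x ∈ ⨅ D ∈ Δ, Subfield.closure ((algebraMap B L) '' {y : B | D y = 0})
      ↔ (∀ D ∈ Δ, D x = 0) :=
  stmt14_general Δ hΔ
end
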